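/- (Multiplier norm controls the block-decay norm) Let ν, d ≥ 1 and s ≥ 0. Let r be a φ-dependent Fourier multiplier of order −s − (d−1)/2 with ∥Op(r)∥_{−s−(d−1)/2, s} < ∞, and let R(φ) := Op(r(φ,·)). Then the block-decay norm of the family R satisfies |R|_s ≤ C ∥Op(r)∥_{−s−(d−1)/2, s}, for a constant C depending only on d. The same estimate holds between the corresponding Lipschitz-in-ω norms when r depends Lipschitz-continuously on a parameter ω. -/

import Mathlib

/-- Nonzero lattice points of `ℤ^d`. -/
abbrev Idx (d : ℕ) := {j : Fin d → ℤ // j ≠ 0}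

/-- Euclidean norm of a lattice point. -/
noncomputable def euclNormZ {n : ℕ} (j : Fin n → ℤ) : ℝ :=
  Real.sqrt (∑ i, ((j i : ℝ)) ^ 2)

/-- `|j|` for a nonzero lattice point. -/
noncomputable def jn {d : ℕ} (j : Idx d) : ℝ := euclNormZ j.1

/-- The set `σ₀(√−Δ)`, as a subtype of `ℝ`. -/
def specT (d : ℕ) := {r : ℝ // ∃ j : Idx d, jn j = r}

/-- The element `|j| ∈ σ₀(√−Δ)` attached to `j`. -/
noncomputable def specOf {d : ℕ} (j : Idx d) : specT d := ⟨jn j, j, rfl⟩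

/-- Weight `⟨ℓ⟩ := max{1,|ℓ|}`. -/
noncomputable def wt1 {ν : ℕ} (ℓ : Fin ν → ℤ) : ℝ := max 1 (euclNormZ ℓ)

/-- `H^s(𝕋^ν)` norm of a function of `φ` given by its Fourier coefficients. -/
noncomputable def sobNphi {ν : ℕ} (s : ℝ) (c : (Fin ν → ℤ) → ℂ) : ℝ :=
  Real.sqrt (∑' ℓ : Fin ν → ℤ, (wt1 ℓ) ^ (2 * s) * ‖c ℓ‖ ^ 2)

/-- A `φ`-dependent Fourier multiplier of order `m` is encoded by the `φ`-Fourier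
coefficients of its symbol, `r : ℤ^ν → σ₀(√−Δ) → ℂ`; its norm is
`∥Op(r)∥_{m,s} := sup_α ‖r(·,α)‖_{H^s(𝕋^ν)} α^{−m}`. -/
noncomputable def multN {ν d : ℕ} (m s : ℝ) (r : (Fin ν → ℤ) → specT d → ℂ) : ℝ :=
  ⨆ α : specT d, sobNphi s (fun ℓ => r ℓ α) * (α.1 : ℝ) ^ (-m)

/-- Finiteness of the multiplier norm `∥Op(r)∥_{m,s}`. -/
def MultFin {ν d : ℕ} (m s : ℝ) (r : (Fin ν → ℤ) → specT d → ℂ) : Prop :=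
  (∀ α : specT d,
    Summable fun ℓ : Fin ν → ℤ => (wt1 ℓ) ^ (2 * s) * ‖r ℓ α‖ ^ 2) ∧
  BddAbove (Set.range fun α : specT d => sobNphi s (fun ℓ => r ℓ α) * (α.1 : ℝ) ^ (-m))

/-- Euclidean distance on `ℝ^ν`. -/
noncomputable def eDistR {ν : ℕ} (a b : Fin ν → ℝ) : ℝ :=
  Real.sqrt (∑ i, (a i - b i) ^ 2)

/-- Pairs of distinct points of `Ω_o`. -/
def OmPairs {ν : ℕ} (Ωo : Set (Fin ν → ℝ)) :=
  {p : (Fin ν → ℝ) × (Fin ν → ℝ) // p.1 ∈ Ωo ∧ p.2 ∈ Ωo ∧ p.1 ≠ p.2}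

/-- The weighted Lipschitz norm `‖·‖^{Lip(γ)}` built from a "norm" `N`. -/
noncomputable def lipN {ν : ℕ} {A : Type*} [Sub A] (γ : ℝ) (Ωo : Set (Fin ν → ℝ))
    (N : A → ℝ) (f : (Fin ν → ℝ) → A) : ℝ :=
  (⨆ ω : Ωo, N (f ω)) +
    γ * ⨆ p : OmPairs Ωo, N (f p.1.1 - f p.1.2) / eDistR p.1.1 p.1.2

/-- Finiteness of the `Lip(γ)` norm built from `N` (with finiteness predicate `P`). -/
def LipFin {ν : ℕ} {A : Type*} [Sub A] (Ωo : Set (Fin ν → ℝ))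
    (N : A → ℝ) (P : A → Prop) (f : (Fin ν → ℝ) → A) : Prop :=
  (∀ ω ∈ Ωo, P (f ω)) ∧ (∀ ω₁ ∈ Ωo, ∀ ω₂ ∈ Ωo, P (f ω₁ - f ω₂)) ∧
  BddAbove (Set.range fun ω : Ωo => N (f ω)) ∧
  BddAbove (Set.range fun p : OmPairs Ωo => N (f p.1.1 - f p.1.2) / eDistR p.1.1 p.1.2)

/-- Squared Hilbert–Schmidt norm of the block `[M]_α^β`. -/
noncomputable def blockHSsq {d : ℕ} (M : Idx d → Idx d → ℂ) (α β : ℝ) : ℝ :=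
  ∑' j : Idx d, ∑' j' : Idx d, if jn j = α ∧ jn j' = β then ‖M j j'‖ ^ 2 else 0

/-- Weight `⟨ℓ,α,β⟩ := max{1,|ℓ|,α,β}`. -/
noncomputable def wt3 {ν : ℕ} (ℓ : Fin ν → ℤ) (α β : ℝ) : ℝ :=
  max 1 (max (euclNormZ ℓ) (max α β))

/-- `Σ_ℓ ⟨ℓ,α,β⟩^{2s} ‖[R̂(ℓ)]_α^β‖²_HS`. -/
noncomputable def decaySq {ν d : ℕ} (s : ℝ) (R : (Fin ν → ℤ) → Idx d → Idx d → ℂ)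
    (α β : ℝ) : ℝ :=
  ∑' ℓ : Fin ν → ℤ, (wt3 ℓ α β) ^ (2 * s) * blockHSsq (R ℓ) α β

/-- The block-decay norm `|R|_s`. -/
noncomputable def decayN {ν d : ℕ} (s : ℝ) (R : (Fin ν → ℤ) → Idx d → Idx d → ℂ) : ℝ :=
  ⨆ p : specT d × specT d, Real.sqrt (decaySq s R p.1.1 p.2.1)

/-- The (diagonal) matrix Fourier coefficients of the family `R(φ) = Op(r(φ,·))`:
`R̂(ℓ)_j^{j'} = r̂(ℓ,|j|) δ_{jj'}`. -/
noncomputable def diagOfSym {ν d : ℕ} (r : (Fin ν → ℤ) → specT d → ℂ) :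
    (Fin ν → ℤ) → Idx d → Idx d → ℂ :=
  fun ℓ j j' => if j = j' then r ℓ (specOf j) else 0

/-!
The Fourier coefficients `R̂(ℓ)` of `R(φ) = Op(r(φ,·))` are diagonal with entries `r̂(ℓ,|j|)`, so
the block `[R̂(ℓ)]_α^β` vanishes for `α ≠ β`, while `‖[R̂(ℓ)]_α^α‖²_HS = #{j : |j| = α} |r̂(ℓ,α)|²`.
The sphere of radius `α ≥ 1` carries at most `2 (5α)^{d-1}` lattice points and
`⟨ℓ,α,α⟩ ≤ ⟨ℓ⟩ α`, hence
`Σ_ℓ ⟨ℓ,α,α⟩^{2s} ‖[R̂(ℓ)]_α^α‖²_HS ≤ 2·5^{d-1} (α^{s+(d-1)/2} ‖r(·,α)‖_{H^s})²`.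
Since `r ↦ Op(r)` commutes with differences, the `Lip(γ)` estimate follows from the same bound.
-/

section

variable {ν d : ℕ}

lemma sq_euclNormZ {n : ℕ} (v : Fin n → ℤ) : euclNormZ v ^ 2 = ∑ i, ((v i : ℝ)) ^ 2 :=
  Real.sq_sqrt (Finset.sum_nonneg fun _ _ => sq_nonneg _)

lemma abs_le_euclNormZ {n : ℕ} (v : Fin n → ℤ) (i : Fin n) : |(v i : ℝ)| ≤ euclNormZ v :=
  Real.abs_le_sqrt (Finset.single_le_sum (f := fun i => ((v i : ℝ)) ^ 2)
    (fun _ _ => sq_nonneg _) (Finset.mem_univ i))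

lemma mem_Icc_ceil_of_euclNormZ_eq {n : ℕ} {v : Fin n → ℤ} {a : ℝ} (hv : euclNormZ v = a)
    (i : Fin n) : v i ∈ Finset.Icc (-⌈a⌉) ⌈a⌉ := by
  have h : (|v i| : ℝ) ≤ ⌈a⌉ := by
    exact_mod_cast (hv ▸ abs_le_euclNormZ v i).trans (Int.le_ceil a)
  exact Finset.mem_Icc.mpr (abs_le.mp (by exact_mod_cast h))

lemma one_le_jn (j : Idx d) : 1 ≤ jn j := by
  obtain ⟨i, hi⟩ := Function.ne_iff.mp j.2
  have h : (1 : ℝ) ≤ |(j.1 i : ℝ)| := by exact_mod_cast Int.one_le_abs hi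
  exact h.trans (abs_le_euclNormZ j.1 i)

lemma one_le_specT (α : specT d) : 1 ≤ α.1 := by
  obtain ⟨j, hj⟩ := α.2
  exact hj ▸ one_le_jn j

lemma specT_pos (α : specT d) : 0 < α.1 := one_pos.trans_le (one_le_specT α)

-- The box `[-⌈a⌉, ⌈a⌉]^d` only serves to make the sphere a `Finset`.
open Classical in
noncomputable def latticeSphere (d : ℕ) (a : ℝ) : Finset (Idx d) :=
  ((Fintype.piFinset fun _ : Fin d => Finset.Icc (-⌈a⌉) ⌈a⌉).subtype (· ≠ 0)).filter (jn · = a)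

lemma mem_latticeSphere {a : ℝ} {j : Idx d} : j ∈ latticeSphere d a ↔ jn j = a := by
  simp only [latticeSphere, Finset.mem_filter, Finset.mem_subtype, Fintype.mem_piFinset,
    Finset.mem_Icc, and_iff_right_iff_imp]
  exact fun hj i => Finset.mem_Icc.mp (mem_Icc_ceil_of_euclNormZ_eq hj i)

lemma eq_of_euclNormZ_eq_of_tail_eq {n : ℕ} {v w : Fin (n + 1) → ℤ}
    (hnorm : euclNormZ v = euclNormZ w) (htail : Fin.tail v = Fin.tail w)
    (hsign : 0 ≤ v 0 ↔ 0 ≤ w 0) : v = w := by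
  have hsq : ((v 0 : ℝ)) ^ 2 = ((w 0 : ℝ)) ^ 2 := by
    have h := congrArg (· ^ 2) hnorm
    simp only [sq_euclNormZ, Fin.sum_univ_succ] at h
    have ht : ∀ i : Fin n, v i.succ = w i.succ := congrFun htail
    simp only [ht] at h
    linarith
  have h0 : v 0 = w 0 := by
    rcases sq_eq_sq_iff_eq_or_eq_neg.mp (by exact_mod_cast hsq : v 0 ^ 2 = w 0 ^ 2) with h | h
    <;> omega
  rw [← Fin.cons_self_tail v, ← Fin.cons_self_tail w, h0, htail]

/-- A point of the sphere is determined by its last `d - 1` coordinates and the sign of the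
first one, whence the bound `2 (2⌈a⌉ + 1)^{d-1}`. -/
lemma card_latticeSphere_le (hd : 1 ≤ d) {a : ℝ} (ha : 1 ≤ a) :
    ((latticeSphere d a).card : ℝ) ≤ 2 * (5 * a) ^ (d - 1) := by
  obtain ⟨n, rfl⟩ : ∃ n, d = n + 1 := ⟨d - 1, by omega⟩
  set box := Fintype.piFinset fun _ : Fin n => Finset.Icc (-⌈a⌉) ⌈a⌉
  have hinj : (latticeSphere (n + 1) a).card ≤ (box ×ˢ (Finset.univ : Finset Bool)).card := by
    refine Finset.card_le_card_of_injOn (fun j => (Fin.tail j.1, decide (0 ≤ j.1 0))) ?_ ?_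
    · intro j hj
      simp only [Finset.mem_coe, mem_latticeSphere] at hj
      simp only [Finset.coe_product, Set.mem_prod, Finset.mem_coe, Finset.mem_univ, and_true, box,
        Fintype.mem_piFinset]
      exact fun i => mem_Icc_ceil_of_euclNormZ_eq hj i.succ
    · intro j hj k hk hjk
      simp only [Finset.mem_coe, mem_latticeSphere] at hj hk
      simp only [Prod.mk.injEq, decide_eq_decide] at hjk
      exact Subtype.ext (eq_of_euclNormZ_eq_of_tail_eq (hj.trans hk.symm) hjk.1 hjk.2)
  have hside : ((⌈a⌉ + 1 - -⌈a⌉).toNat : ℝ) ≤ 5 * a := by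
    have h1 : (1 : ℤ) ≤ ⌈a⌉ := by exact_mod_cast ha.trans (Int.le_ceil a)
    rw [← Int.cast_natCast, Int.toNat_of_nonneg (by omega)]
    push_cast
    linarith [Int.ceil_lt_add_one a]
  calc ((latticeSphere (n + 1) a).card : ℝ) ≤ (box ×ˢ (Finset.univ : Finset Bool)).card := by
        exact_mod_cast hinj
    _ = 2 * ((⌈a⌉ + 1 - -⌈a⌉).toNat : ℝ) ^ n := by
        simp [box, Finset.card_product, Fintype.card_piFinset, Int.card_Icc, mul_comm]
    _ ≤ 2 * (5 * a) ^ (n + 1 - 1) := by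
        rw [Nat.add_sub_cancel]; gcongr

lemma tsum_ite_jn_eq (a c : ℝ) :
    ∑' j : Idx d, (if jn j = a then c else 0) = (latticeSphere d a).card * c := by
  rw [tsum_eq_sum (s := latticeSphere d a) fun j hj => if_neg (mt mem_latticeSphere.mpr hj),
    Finset.sum_congr rfl fun j hj => if_pos (mem_latticeSphere.mp hj), Finset.sum_const,
    nsmul_eq_mul]

lemma blockHSsq_diagOfSym_eq_tsum (r : (Fin ν → ℤ) → specT d → ℂ)
    (ℓ : Fin ν → ℤ) (α β : specT d) :
    blockHSsq (diagOfSym r ℓ) α.1 β.1 =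
      ∑' j : Idx d, if jn j = α.1 ∧ jn j = β.1 then ‖r ℓ α‖ ^ 2 else 0 := by
  refine tsum_congr fun j => ?_
  rw [tsum_eq_single j fun j' hj' => by simp [diagOfSym, Ne.symm hj']]
  by_cases hj : jn j = α.1 ∧ jn j = β.1
  · rw [if_pos hj, if_pos hj, diagOfSym, if_pos rfl, show specOf j = α from Subtype.ext hj.1]
  · rw [if_neg hj, if_neg hj]

lemma blockHSsq_diagOfSym_self (r : (Fin ν → ℤ) → specT d → ℂ) (ℓ : Fin ν → ℤ)
    (α : specT d) :
    blockHSsq (diagOfSym r ℓ) α.1 α.1 = (latticeSphere d α.1).card * ‖r ℓ α‖ ^ 2 := by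
  simp only [blockHSsq_diagOfSym_eq_tsum, and_self, tsum_ite_jn_eq]

lemma blockHSsq_diagOfSym_of_ne (r : (Fin ν → ℤ) → specT d → ℂ) (ℓ : Fin ν → ℤ)
    {α β : specT d} (hαβ : α ≠ β) : blockHSsq (diagOfSym r ℓ) α.1 β.1 = 0 := by
  rw [blockHSsq_diagOfSym_eq_tsum]
  refine (tsum_congr fun j => if_neg ?_).trans tsum_zero
  exact fun hj => hαβ (Subtype.ext (hj.1.symm.trans hj.2))

lemma one_le_wt1 (ℓ : Fin ν → ℤ) : 1 ≤ wt1 ℓ := le_max_left _ _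

lemma wt1_nonneg (ℓ : Fin ν → ℤ) : 0 ≤ wt1 ℓ := zero_le_one.trans (one_le_wt1 ℓ)

lemma wt3_nonneg (ℓ : Fin ν → ℤ) (a b : ℝ) : 0 ≤ wt3 ℓ a b :=
  zero_le_one.trans (le_max_left _ _)

lemma wt3_le_wt1_mul (ℓ : Fin ν → ℤ) {a : ℝ} (ha : 1 ≤ a) : wt3 ℓ a a ≤ wt1 ℓ * a := by
  have hw := one_le_wt1 ℓ
  rw [wt3, max_self]
  refine max_le (one_le_mul_of_one_le_of_one_le hw ha) (max_le ?_ ?_)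
  · exact (le_max_right _ _ : euclNormZ ℓ ≤ wt1 ℓ).trans (le_mul_of_one_le_right (wt1_nonneg ℓ) ha)
  · exact le_mul_of_one_le_left (by linarith) hw

lemma sobNphi_sq (s : ℝ) (c : (Fin ν → ℤ) → ℂ) :
    sobNphi s c ^ 2 = ∑' ℓ, wt1 ℓ ^ (2 * s) * ‖c ℓ‖ ^ 2 :=
  Real.sq_sqrt (tsum_nonneg fun ℓ =>
    mul_nonneg (Real.rpow_nonneg (wt1_nonneg ℓ) _) (sq_nonneg _))

lemma decaySq_diagOfSym_le {s : ℝ} (hs : 0 ≤ s) (r : (Fin ν → ℤ) → specT d → ℂ)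
    (α β : specT d) (hr : Summable fun ℓ => wt1 ℓ ^ (2 * s) * ‖r ℓ α‖ ^ 2) :
    decaySq s (diagOfSym r) α.1 β.1 ≤
      (latticeSphere d α.1).card * α.1 ^ (2 * s) * sobNphi s (fun ℓ => r ℓ α) ^ 2 := by
  have hα := one_le_specT α
  have hrhs : 0 ≤ (latticeSphere d α.1).card * α.1 ^ (2 * s) *
      sobNphi s (fun ℓ => r ℓ α) ^ 2 := by
    have := Real.rpow_nonneg (specT_pos α).le (2 * s)
    positivity
  obtain hαβ | rfl := ne_or_eq α β
  · simpa [decaySq, blockHSsq_diagOfSym_of_ne r _ hαβ] using hrhs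
  have hterm : ∀ ℓ, wt3 ℓ α.1 α.1 ^ (2 * s) * blockHSsq (diagOfSym r ℓ) α.1 α.1 ≤
      (latticeSphere d α.1).card * α.1 ^ (2 * s) * (wt1 ℓ ^ (2 * s) * ‖r ℓ α‖ ^ 2) := by
    intro ℓ
    have hw : wt3 ℓ α.1 α.1 ^ (2 * s) ≤ wt1 ℓ ^ (2 * s) * α.1 ^ (2 * s) := by
      rw [← Real.mul_rpow (wt1_nonneg ℓ) (specT_pos α).le]
      exact Real.rpow_le_rpow (wt3_nonneg ℓ _ _) (wt3_le_wt1_mul ℓ hα) (by linarith)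
    rw [blockHSsq_diagOfSym_self]
    calc wt3 ℓ α.1 α.1 ^ (2 * s) * ((latticeSphere d α.1).card * ‖r ℓ α‖ ^ 2)
        ≤ wt1 ℓ ^ (2 * s) * α.1 ^ (2 * s) * ((latticeSphere d α.1).card * ‖r ℓ α‖ ^ 2) := by
          gcongr
      _ = _ := by ring
  have hterm_nonneg : ∀ ℓ, 0 ≤ wt3 ℓ α.1 α.1 ^ (2 * s) * blockHSsq (diagOfSym r ℓ) α.1 α.1 := by
    intro ℓ
    rw [blockHSsq_diagOfSym_self]
    have := Real.rpow_nonneg (wt3_nonneg ℓ α.1 α.1) (2 * s)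
    positivity
  rw [decaySq, sobNphi_sq, ← tsum_mul_left]
  exact Summable.tsum_le_tsum hterm (Summable.of_nonneg_of_le hterm_nonneg hterm
    (hr.mul_left _)) (hr.mul_left _)

lemma sqrt_decaySq_diagOfSym_le (hd : 1 ≤ d) {s : ℝ} (hs : 0 ≤ s)
    (r : (Fin ν → ℤ) → specT d → ℂ) (α β : specT d)
    (hr : Summable fun ℓ => wt1 ℓ ^ (2 * s) * ‖r ℓ α‖ ^ 2) :
    Real.sqrt (decaySq s (diagOfSym r) α.1 β.1) ≤
      Real.sqrt (2 * 5 ^ (d - 1)) *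
        (sobNphi s (fun ℓ => r ℓ α) * α.1 ^ (-(-s - ((d : ℝ) - 1) / 2))) := by
  have hα := specT_pos α
  have hpow : (α.1 ^ (-(-s - ((d : ℝ) - 1) / 2))) ^ 2 = α.1 ^ (2 * s) * α.1 ^ (d - 1) := by
    rw [← Real.rpow_natCast, ← Real.rpow_mul hα.le, ← Real.rpow_natCast α.1 (d - 1),
      ← Real.rpow_add hα, Nat.cast_sub hd]
    congr 1
    push_cast
    ring
  have hrhs : 0 ≤ Real.sqrt (2 * 5 ^ (d - 1)) *
      (sobNphi s (fun ℓ => r ℓ α) * α.1 ^ (-(-s - ((d : ℝ) - 1) / 2))) :=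
    mul_nonneg (Real.sqrt_nonneg _) (mul_nonneg (Real.sqrt_nonneg _) (Real.rpow_nonneg hα.le _))
  rw [Real.sqrt_le_left hrhs, mul_pow, mul_pow, Real.sq_sqrt (by positivity), hpow]
  calc decaySq s (diagOfSym r) α.1 β.1
      ≤ (latticeSphere d α.1).card * α.1 ^ (2 * s) * sobNphi s (fun ℓ => r ℓ α) ^ 2 :=
        decaySq_diagOfSym_le hs r α β hr
    _ ≤ 2 * (5 * α.1) ^ (d - 1) * α.1 ^ (2 * s) * sobNphi s (fun ℓ => r ℓ α) ^ 2 := by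
        have := Real.rpow_nonneg hα.le (2 * s)
        gcongr
        exact card_latticeSphere_le hd (one_le_specT α)
    _ = _ := by ring

lemma multN_nonneg (m s : ℝ) (r : (Fin ν → ℤ) → specT d → ℂ) : 0 ≤ multN m s r :=
  Real.iSup_nonneg fun α => mul_nonneg (Real.sqrt_nonneg _) (Real.rpow_nonneg (specT_pos α).le _)

lemma decayN_diagOfSym_le (hd : 1 ≤ d) {s : ℝ} (hs : 0 ≤ s)
    (r : (Fin ν → ℤ) → specT d → ℂ) (hr : MultFin (-s - ((d : ℝ) - 1) / 2) s r) :
    decayN s (diagOfSym r) ≤ Real.sqrt (2 * 5 ^ (d - 1)) * multN (-s - ((d : ℝ) - 1) / 2) s r :=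
  Real.iSup_le (fun p => (sqrt_decaySq_diagOfSym_le hd hs r p.1 p.2 (hr.1 p.1)).trans
      (mul_le_mul_of_nonneg_left (le_ciSup hr.2 p.1) (Real.sqrt_nonneg _)))
    (mul_nonneg (Real.sqrt_nonneg _) (multN_nonneg _ _ _))

lemma diagOfSym_sub (r r' : (Fin ν → ℤ) → specT d → ℂ) :
    diagOfSym (r - r') = diagOfSym r - diagOfSym r' := by
  funext ℓ j j'
  by_cases h : j = j' <;> simp [diagOfSym, h]

lemma ciSup_le_mul_ciSup {ι : Sort*} {f g : ι → ℝ} {C : ℝ} (hC : 0 ≤ C)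
    (hg : BddAbove (Set.range g)) (h : ∀ i, f i ≤ C * g i) : ⨆ i, f i ≤ C * ⨆ i, g i := by
  rw [Real.mul_iSup_of_nonneg hC]
  refine ciSup_mono ?_ h
  have := (monotone_mul_left_of_nonneg hC).map_bddAbove hg
  rwa [← Set.range_comp] at this

lemma lipN_comp_le {A B : Type*} [Sub A] [Sub B] {N : A → ℝ} {M : B → ℝ}
    {P : A → Prop} {T : A → B} {C γ : ℝ} (hC : 0 ≤ C) (hγ : 0 ≤ γ)
    (hT : ∀ a b, T (a - b) = T a - T b) (hTN : ∀ a, P a → M (T a) ≤ C * N a)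
    {Ωo : Set (Fin ν → ℝ)} {f : (Fin ν → ℝ) → A} (hf : LipFin Ωo N P f) :
    lipN γ Ωo M (fun ω => T (f ω)) ≤ C * lipN γ Ωo N f := by
  obtain ⟨hP, hPsub, hbdd, hbdd_sub⟩ := hf
  have hsup := ciSup_le_mul_ciSup hC hbdd fun ω => hTN _ (hP ω ω.2)
  have hsup_sub : ⨆ p : OmPairs Ωo, M (T (f p.1.1) - T (f p.1.2)) / eDistR p.1.1 p.1.2 ≤
      C * ⨆ p : OmPairs Ωo, N (f p.1.1 - f p.1.2) / eDistR p.1.1 p.1.2 := by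
    refine ciSup_le_mul_ciSup hC hbdd_sub fun p => ?_
    rw [← hT, ← mul_div_assoc]
    exact div_le_div_of_nonneg_right (hTN _ (hPsub _ p.2.1 _ p.2.2.1)) (Real.sqrt_nonneg _)
  calc lipN γ Ωo M (fun ω => T (f ω))
      ≤ C * (⨆ ω : Ωo, N (f ω)) +
          γ * (C * ⨆ p : OmPairs Ωo, N (f p.1.1 - f p.1.2) / eDistR p.1.1 p.1.2) :=
        add_le_add hsup (mul_le_mul_of_nonneg_left hsup_sub hγ)
    _ = C * lipN γ Ωo N f := by rw [lipN]; ring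

end

/-- **Multiplier norm controls the block-decay norm.** For `s ≥ 0` and a
`φ`-dependent Fourier multiplier `r` of order `−s − (d−1)/2`, the family `R(φ) = Op(r(φ,·))`
satisfies `|R|_s ≤ C ∥Op(r)∥_{−s−(d−1)/2, s}` with `C` depending only on `d`; the same
estimate holds between the corresponding `Lip(γ)` norms. -/
theorem stmt16 (d : ℕ) (hd : 1 ≤ d) :
    ∃ C : ℝ, 0 < C ∧
      ∀ ν : ℕ, 1 ≤ ν → ∀ s : ℝ, 0 ≤ s →
        (∀ r : (Fin ν → ℤ) → specT d → ℂ,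
          MultFin (-s - ((d : ℝ) - 1) / 2) s r →
          decayN s (diagOfSym r) ≤ C * multN (-s - ((d : ℝ) - 1) / 2) s r) ∧
        (∀ γ : ℝ, 0 < γ → ∀ Ωo : Set (Fin ν → ℝ),
          ∀ rf : (Fin ν → ℝ) → (Fin ν → ℤ) → specT d → ℂ,
            LipFin Ωo (multN (-s - ((d : ℝ) - 1) / 2) s)
              (MultFin (-s - ((d : ℝ) - 1) / 2) s) rf →
            lipN γ Ωo (decayN s) (fun ω => diagOfSym (rf ω)) ≤
              C * lipN γ Ωo (multN (-s - ((d : ℝ) - 1) / 2) s) rf) :=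
  ⟨Real.sqrt (2 * 5 ^ (d - 1)), Real.sqrt_pos.mpr (by positivity), fun _ _ _ hs =>
    ⟨decayN_diagOfSym_le hd hs, fun _ hγ _ _ hrf =>
      lipN_comp_le (Real.sqrt_nonneg _) hγ.le diagOfSym_sub (decayN_diagOfSym_le hd hs) hrf⟩⟩
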